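/- arXiv:2408.03778 — 3 statements merged into one kernel-verified Lean document; each statement's English description precedes it below -/
import Mathlib

section
/- If a finite-dimensional algebra A over a field k is both multiserial and quasi-biserial, then A is biserial. -/
universe u v

section Defs

variable (A : Type u) [Ring A]

/-- `radSucc A N = rad(A) · N`, the product of the Jacobson radical with a submodule. -/
def radSucc {M : Type v} [AddCommGroup M] [Module A M] (N : Submodule A M) : Submodule A M :=
  Submodule.span A {x : M | ∃ r ∈ Ideal.jacobson (⊥ : Ideal A), ∃ m ∈ N, x = r • m}

/-- `radPow A M n = rad^n(M)`. -/
def radPow (M : Type v) [AddCommGroup M] [Module A M] (n : ℕ) : Submodule A M :=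
  (radSucc A)^[n] (⊤ : Submodule A M)

/-- A module is uniserial if its submodules form a chain (equivalently, it has a unique
composition series when finite length). -/
def IsUniserialMod (M : Type v) [AddCommGroup M] [Module A M] : Prop :=
  ∀ N N' : Submodule A M, N ≤ N' ∨ N' ≤ N

/-- A module is indecomposable: nontrivial and its only idempotent endomorphisms are 0, 1. -/
def IsIndecomposableMod (M : Type v) [AddCommGroup M] [Module A M] : Prop :=
  Nontrivial M ∧ ∀ e : Module.End A M, e ∘ₗ e = e → e = 0 ∨ e = LinearMap.id

/-- Biserial module: not uniserial, and rad(M) = U + V with U, V uniserial and U ∩ V zero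
or simple. -/
def IsBiserialMod (M : Type v) [AddCommGroup M] [Module A M] : Prop :=
  ¬ IsUniserialMod A M ∧
    ∃ U V : Submodule A M, IsUniserialMod A ↥U ∧ IsUniserialMod A ↥V ∧
      radPow A M 1 = U ⊔ V ∧ (U ⊓ V = ⊥ ∨ IsSimpleModule A ↥(U ⊓ V))

/-- Multiserial module: rad(M) is a sum of uniserial submodules with pairwise intersections
zero or simple. -/
def IsMultiserialMod (M : Type v) [AddCommGroup M] [Module A M] : Prop :=
  ∃ (n : ℕ) (U : Fin n → Submodule A M), (∀ i, IsUniserialMod A ↥(U i)) ∧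
    radPow A M 1 = ⨆ i, U i ∧
    ∀ i j, i ≠ j → (U i ⊓ U j = ⊥ ∨ IsSimpleModule A ↥(U i ⊓ U j))

/-- Quasi-biserial module: not uniserial, and there is m > 0 with rad^m(M) = U + V,
U, V uniserial, and M/rad^m(M) uniserial. -/
def IsQuasiBiserialMod (M : Type v) [AddCommGroup M] [Module A M] : Prop :=
  ¬ IsUniserialMod A M ∧
    ∃ m : ℕ, 0 < m ∧ ∃ U V : Submodule A M, IsUniserialMod A ↥U ∧ IsUniserialMod A ↥V ∧
      radPow A M m = U ⊔ V ∧ IsUniserialMod A (M ⧸ radPow A M m)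

/-- A is biserial: every indecomposable projective left or right module is uniserial or
biserial. -/
def IsBiserialAlgebra : Prop :=
  (∀ (M : Type u) [AddCommGroup M] [Module A M], Module.Projective A M →
      IsIndecomposableMod A M → IsUniserialMod A M ∨ IsBiserialMod A M) ∧
  (∀ (M : Type u) [AddCommGroup M] [Module Aᵐᵒᵖ M], Module.Projective Aᵐᵒᵖ M →
      IsIndecomposableMod Aᵐᵒᵖ M → IsUniserialMod Aᵐᵒᵖ M ∨ IsBiserialMod Aᵐᵒᵖ M)

/-- A is multiserial: every indecomposable projective left or right module is multiserial. -/
def IsMultiserialAlgebra : Prop :=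
  (∀ (M : Type u) [AddCommGroup M] [Module A M], Module.Projective A M →
      IsIndecomposableMod A M → IsMultiserialMod A M) ∧
  (∀ (M : Type u) [AddCommGroup M] [Module Aᵐᵒᵖ M], Module.Projective Aᵐᵒᵖ M →
      IsIndecomposableMod Aᵐᵒᵖ M → IsMultiserialMod Aᵐᵒᵖ M)

/-- A is quasi-biserial: every indecomposable projective left or right module is uniserial
or quasi-biserial. -/
def IsQuasiBiserialAlgebra : Prop :=
  (∀ (M : Type u) [AddCommGroup M] [Module A M], Module.Projective A M →
      IsIndecomposableMod A M → IsUniserialMod A M ∨ IsQuasiBiserialMod A M) ∧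
  (∀ (M : Type u) [AddCommGroup M] [Module Aᵐᵒᵖ M], Module.Projective Aᵐᵒᵖ M →
      IsIndecomposableMod Aᵐᵒᵖ M → IsUniserialMod Aᵐᵒᵖ M ∨ IsQuasiBiserialMod Aᵐᵒᵖ M)

end Defs

section Aux

open Submodule LinearMap

universe w

variable {B : Type u} [Ring B]

/-- product of a left ideal with a submodule -/
def idealApp (I : Ideal B) {M : Type w} [AddCommGroup M] [Module B M] (N : Submodule B M) :
    Submodule B M :=
  Submodule.span B {x : M | ∃ r ∈ I, ∃ m ∈ N, x = r • m}

theorem radSucc_eq_idealApp {M : Type w} [AddCommGroup M] [Module B M] (N : Submodule B M) :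
    radSucc B N = idealApp (Ideal.jacobson (⊥ : Ideal B)) N := rfl

variable {M : Type w} [AddCommGroup M] [Module B M]

theorem idealApp_le (I : Ideal B) (N : Submodule B M) : idealApp I N ≤ N := by
  rw [idealApp, span_le]
  rintro x ⟨r, hr, m, hm, rfl⟩
  exact N.smul_mem r hm

theorem smul_mem_idealApp {I : Ideal B} {N : Submodule B M} {r : B} {m : M}
    (hr : r ∈ I) (hm : m ∈ N) : r • m ∈ idealApp I N :=
  subset_span ⟨r, hr, m, hm, rfl⟩

theorem idealApp_mono (I : Ideal B) {N N' : Submodule B M} (h : N ≤ N') :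
    idealApp I N ≤ idealApp I N' := by
  apply span_mono
  rintro x ⟨r, hr, m, hm, rfl⟩
  exact ⟨r, hr, m, h hm, rfl⟩

theorem idealApp_sup_le (I : Ideal B) (N N' : Submodule B M) :
    idealApp I (N ⊔ N') ≤ idealApp I N ⊔ idealApp I N' := by
  rw [idealApp, span_le]
  rintro x ⟨r, hr, m, hm, rfl⟩
  obtain ⟨y, hy, z, hz, rfl⟩ := Submodule.mem_sup.1 hm
  rw [smul_add]
  exact add_mem (Submodule.mem_sup_left (smul_mem_idealApp hr hy))
    (Submodule.mem_sup_right (smul_mem_idealApp hr hz))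

theorem jac_mul_right {x : B} (h : x ∈ Ideal.jacobson (⊥ : Ideal B)) (y : B) :
    x * y ∈ Ideal.jacobson (⊥ : Ideal B) :=
  Ideal.mul_mem_right y _ h

theorem idealApp_idealApp (I I' : Ideal B) (hI : ∀ x ∈ I, ∀ y : B, x * y ∈ I)
    (N : Submodule B M) :
    idealApp I (idealApp I' N) ≤ idealApp (idealApp I (I' : Submodule B B)) N := by
  rw [idealApp, span_le]
  rintro w ⟨r, hr, x, hx, rfl⟩
  revert r
  induction hx using Submodule.span_induction with
  | mem x hxg =>
    intro r hr
    obtain ⟨s, hs, m, hm, rfl⟩ := hxg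
    rw [smul_smul]
    exact smul_mem_idealApp (smul_mem_idealApp hr hs) hm
  | zero => intro r hr; rw [smul_zero]; exact zero_mem _
  | add x y _ _ hx hy => intro r hr; rw [smul_add]; exact add_mem (hx r hr) (hy r hr)
  | smul a x _ hx =>
    intro r hr
    rw [smul_smul]
    exact hx (r * a) (hI r hr a)


/-- powers of the Jacobson radical -/
def jacPow : ℕ → Ideal B
  | 0 => ⊤
  | n + 1 => idealApp (Ideal.jacobson (⊥ : Ideal B)) ((jacPow n : Ideal B) : Submodule B B)

theorem jacPow_succ_le (n : ℕ) : (jacPow (n + 1) : Ideal B) ≤ jacPow n :=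
  idealApp_le _ _

theorem jacPow_antitone : Antitone (jacPow : ℕ → Ideal B) :=
  antitone_nat_of_succ_le jacPow_succ_le

theorem radSucc_iterate_le (N : Submodule B M) :
    ∀ i, (radSucc B)^[i] N ≤ idealApp (jacPow i) N
  | 0 => by
    intro x hx
    simpa using smul_mem_idealApp (I := (jacPow 0 : Ideal B)) (r := (1 : B))
      (by simp [jacPow]) hx
  | i + 1 => by
    rw [Function.iterate_succ_apply']
    calc radSucc B ((radSucc B)^[i] N)
        ≤ radSucc B (idealApp (jacPow i) N) := by
          rw [radSucc_eq_idealApp, radSucc_eq_idealApp]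
          exact idealApp_mono _ (radSucc_iterate_le N i)
      _ ≤ idealApp (jacPow (i + 1)) N := by
          rw [radSucc_eq_idealApp]
          exact idealApp_idealApp _ _ (fun x hx y => jac_mul_right hx y) N

/-- Nakayama for finitely generated left ideals. -/
theorem span_eq_bot_of_le_jac_app : ∀ (n : ℕ) (s : Finset B), s.card = n →
    Submodule.span B (s : Set B) ≤
      idealApp (Ideal.jacobson (⊥ : Ideal B)) (Submodule.span B (s : Set B)) →
    Submodule.span B (s : Set B) = ⊥ := by
  classical
  intro n
  induction n with
  | zero =>
    intro s hs _
    rw [Finset.card_eq_zero.1 hs]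
    simp
  | succ n ih =>
    intro s hs hle
    obtain ⟨a, ha⟩ : s.Nonempty := Finset.card_pos.1 (by omega)
    -- every element of `idealApp J (span s)` is a J-combination of elements of s
    have key : ∀ x ∈ idealApp (Ideal.jacobson (⊥ : Ideal B)) (Submodule.span B (s : Set B)),
        ∃ c : B → B, (∀ b, c b ∈ Ideal.jacobson (⊥ : Ideal B)) ∧ x = ∑ b ∈ s, c b * b := by
      intro x hx
      induction hx using Submodule.span_induction with
      | mem x hxg =>
        obtain ⟨r, hr, m, hm, rfl⟩ := hxg
        obtain ⟨d, -, hd⟩ := mem_span_finset.1 hm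
        refine ⟨fun b => r * d b, fun b => jac_mul_right hr _, ?_⟩
        rw [smul_eq_mul, ← hd, Finset.mul_sum]
        exact Finset.sum_congr rfl fun b _ => by rw [smul_eq_mul, mul_assoc]
      | zero => exact ⟨0, fun b => zero_mem _, by simp⟩
      | add x y _ _ hx hy =>
        obtain ⟨c, hc, rfl⟩ := hx
        obtain ⟨c', hc', rfl⟩ := hy
        refine ⟨c + c', fun b => add_mem (hc b) (hc' b), ?_⟩
        rw [← Finset.sum_add_distrib]
        exact Finset.sum_congr rfl fun b _ => by simp [add_mul]
      | smul t x _ hx =>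
        obtain ⟨c, hc, rfl⟩ := hx
        refine ⟨fun b => t * c b, fun b => (Ideal.jacobson ⊥).smul_mem t (hc b), ?_⟩
        rw [smul_eq_mul, Finset.mul_sum]
        exact Finset.sum_congr rfl fun b _ => by rw [mul_assoc]
    -- express a
    obtain ⟨c, hc, hca⟩ := key a (hle (Submodule.subset_span ha))
    -- (1 - c a) * a lies in the span of s.erase a
    have h1 : (1 - c a) * a ∈ Submodule.span B ((s.erase a : Finset B) : Set B) := by
      have : a - c a * a = ∑ b ∈ s.erase a, c b * b := by
        rw [Finset.sum_erase_eq_sub ha, ← hca]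
      rw [sub_mul, one_mul, this]
      exact Submodule.sum_mem _ fun b hb =>
        (Submodule.span B _).smul_mem (c b) (Submodule.subset_span (by exact_mod_cast hb))
    obtain ⟨u, hu⟩ : ∃ u, u * (1 - c a) = 1 := by
      obtain ⟨z, hz⟩ := Ideal.exists_mul_sub_mem_of_sub_one_mem_jacobson (1 - c a)
        (by simpa using neg_mem (hc a))
      exact ⟨z, by rwa [Ideal.mem_bot, sub_eq_zero] at hz⟩
    have ha_mem : a ∈ Submodule.span B ((s.erase a : Finset B) : Set B) := by
      have h2 := Submodule.smul_mem _ u h1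
      rwa [smul_eq_mul, ← mul_assoc, hu, one_mul] at h2
    have hspan : Submodule.span B (s : Set B) =
        Submodule.span B ((s.erase a : Finset B) : Set B) := by
      apply le_antisymm
      · rw [Submodule.span_le]
        intro b hb
        rcases eq_or_ne b a with rfl | hba
        · exact ha_mem
        · exact Submodule.subset_span (by exact_mod_cast Finset.mem_erase.2 ⟨hba, hb⟩)
      · exact Submodule.span_mono (by exact_mod_cast Finset.erase_subset a s)
    rw [hspan] at hle ⊢
    exact ih (s.erase a) (by rw [Finset.card_erase_of_mem ha]; omega) hle

theorem exists_jacPow_eq_bot [IsArtinian B B] [IsNoetherian B B] :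
    ∃ n, (jacPow n : Ideal B) = ⊥ := by
  obtain ⟨n, hn⟩ := IsArtinian.monotone_stabilizes
    (⟨fun i => OrderDual.toDual (jacPow i), fun i j hij => jacPow_antitone hij⟩ :
      ℕ →o (Submodule B B)ᵒᵈ)
  have hstab : (jacPow (n + 1) : Ideal B) = jacPow n := (hn (n+1) (by omega)).symm
  obtain ⟨s, hs⟩ := IsNoetherian.noetherian ((jacPow n : Ideal B) : Submodule B B)
  refine ⟨n, ?_⟩
  rw [← hs]
  refine span_eq_bot_of_le_jac_app s.card s rfl ?_
  rw [hs]
  exact le_of_eq hstab.symm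

theorem idealApp_bot (N : Submodule B M) : idealApp (⊥ : Ideal B) N = ⊥ := by
  apply le_antisymm _ bot_le
  rw [idealApp, Submodule.span_le]
  rintro x ⟨r, hr, m, hm, rfl⟩
  rw [Ideal.mem_bot] at hr
  simp [hr]

theorem radSucc_mono {N N' : Submodule B M} (h : N ≤ N') : radSucc B N ≤ radSucc B N' := by
  rw [radSucc_eq_idealApp, radSucc_eq_idealApp]; exact idealApp_mono _ h

theorem radSucc_le (N : Submodule B M) : radSucc B N ≤ N := idealApp_le _ _

theorem radSucc_sup_le (N N' : Submodule B M) :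
    radSucc B (N ⊔ N') ≤ radSucc B N ⊔ radSucc B N' := idealApp_sup_le _ _ _

theorem radSucc_iterate_sup_le (C : Submodule B M) (hC : radSucc B C ≤ C) :
    ∀ i (X : Submodule B M), (radSucc B)^[i] (X ⊔ C) ≤ (radSucc B)^[i] X ⊔ C := by
  intro i
  induction i with
  | zero => intro X; simp
  | succ i ih =>
    intro X
    rw [Function.iterate_succ_apply', Function.iterate_succ_apply']
    calc radSucc B ((radSucc B)^[i] (X ⊔ C)) ≤ radSucc B ((radSucc B)^[i] X ⊔ C) :=
          radSucc_mono (ih X)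
      _ ≤ radSucc B ((radSucc B)^[i] X) ⊔ radSucc B C := radSucc_sup_le _ _
      _ ≤ radSucc B ((radSucc B)^[i] X) ⊔ C := sup_le_sup_left hC _

/-- Nakayama's lemma for modules over `B`, via nilpotency of the radical. -/
theorem nakayama [IsArtinian B B] [IsNoetherian B B] {N C : Submodule B M}
    (h : N ≤ radSucc B N ⊔ C) : N ≤ C := by
  obtain ⟨n, hn⟩ := exists_jacPow_eq_bot (B := B)
  have main : ∀ i, N ≤ (radSucc B)^[i] N ⊔ C := by
    intro i
    induction i with
    | zero => simpa using le_sup_left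
    | succ i ih =>
      have hmono : Monotone (radSucc B (M := M)) := fun _ _ hx => radSucc_mono hx
      have h2 : (radSucc B)^[i] N ≤ (radSucc B)^[i] (radSucc B N ⊔ C) := hmono.iterate i h
      have h3 : (radSucc B)^[i] (radSucc B N ⊔ C) ≤ (radSucc B)^[i] (radSucc B N) ⊔ C :=
        radSucc_iterate_sup_le C (radSucc_le C) i (radSucc B N)
      rw [← Function.iterate_succ_apply] at h3
      exact ih.trans (sup_le (h2.trans h3) le_sup_right)
  have := main n
  have hbot : (radSucc B)^[n] N = ⊥ := by
    have h1 := radSucc_iterate_le N n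
    rw [hn, idealApp_bot] at h1
    exact le_bot_iff.1 h1
  rwa [hbot, bot_sup_eq] at this


theorem isSemisimpleModule_of_isSimpleModule {R : Type*} {M : Type*} [Ring R] [AddCommGroup M]
    [Module R M] [IsSimpleModule R M] : IsSemisimpleModule R M :=
  IsSemisimpleModule.of_sSup_simples_eq_top
    (top_unique (le_sSup (show IsSimpleModule R (⊤ : Submodule R M) from
      IsSimpleModule.congr Submodule.topEquiv)))

theorem jacobson_eq_finset_inf [IsArtinian B B] :
    ∃ s : Finset (Ideal B), (∀ m ∈ s, IsCoatom m) ∧ Ideal.jacobson (⊥ : Ideal B) = s.inf id := by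
  classical
  obtain ⟨N₀, ⟨s₀, hs₀, hN₀⟩, hmin⟩ := IsArtinian.set_has_minimal
    {N : Ideal B | ∃ s : Finset (Ideal B), (∀ m ∈ s, IsCoatom m) ∧ N = s.inf id}
    ⟨⊤, ∅, by simp, by simp⟩
  refine ⟨s₀, hs₀, le_antisymm ?_ ?_⟩
  · exact Finset.le_inf fun m hm =>
      sInf_le ⟨bot_le, Ideal.isMaximal_def.2 (hs₀ m hm)⟩
  · rw [← hN₀]
    apply le_sInf
    rintro m ⟨-, hm⟩
    have hmem : N₀ ⊓ m ∈ {N : Ideal B | ∃ s : Finset (Ideal B),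
        (∀ m ∈ s, IsCoatom m) ∧ N = s.inf id} := by
      refine ⟨insert m s₀, ?_, ?_⟩
      · intro x hx
        rcases Finset.mem_insert.1 hx with rfl | hx
        · exact Ideal.isMaximal_def.1 hm
        · exact hs₀ x hx
      · rw [Finset.inf_insert, ← hN₀, inf_comm]
        rfl
    have hlt := hmin _ hmem
    have heq : N₀ ⊓ m = N₀ := by
      by_contra hne
      exact hlt (lt_of_le_of_ne inf_le_left hne)
    rw [← heq]
    exact inf_le_right

theorem isSemisimpleModule_quot_jacobson [IsArtinian B B] :
    IsSemisimpleModule B (B ⧸ Ideal.jacobson (⊥ : Ideal B)) := by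
  classical
  obtain ⟨s, hs, hJ⟩ := jacobson_eq_finset_inf (B := B)
  let g : B →ₗ[B] (∀ m : s, B ⧸ (m : Ideal B)) := LinearMap.pi fun m => (m : Ideal B).mkQ
  have hker : LinearMap.ker g = Ideal.jacobson (⊥ : Ideal B) := by
    rw [LinearMap.ker_pi, hJ, Finset.inf_eq_iInf]
    simp [Submodule.ker_mkQ, iInf_subtype]
  have hsimple : ∀ m : s, IsSimpleModule B (B ⧸ ((m : Ideal B) : Submodule B B)) := fun m =>
    isSimpleModule_iff_isCoatom.2 (hs m m.2)
  have hss : IsSemisimpleModule B (∀ m : s, B ⧸ (m : Ideal B)) := by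
    refine isSemisimpleModule_of_isSemisimpleModule_submodule'
      (p := fun i => LinearMap.range (LinearMap.single B _ i)) (fun i => ?_)
      (LinearMap.iSup_range_single B _)
    have : IsSemisimpleModule B (B ⧸ (i : Ideal B)) :=
      have := hsimple i; isSemisimpleModule_of_isSimpleModule
    exact IsSemisimpleModule.range _
  let f := (Ideal.jacobson (⊥ : Ideal B)).liftQ g hker.ge
  have hfker : LinearMap.ker f = ⊥ := Submodule.ker_liftQ_eq_bot _ _ _ hker.le
  exact IsSemisimpleModule.congr (M := ↥(LinearMap.range f))
    (LinearEquiv.ofInjective f (LinearMap.ker_eq_bot.mp hfker))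


theorem radPow_succ (n : ℕ) : radPow B M (n + 1) = radSucc B (radPow B M n) :=
  Function.iterate_succ_apply' _ _ _

theorem radPow_succ_le (n : ℕ) : radPow B M (n + 1) ≤ radPow B M n := by
  rw [radPow_succ]; exact radSucc_le _

theorem radPow_antitone : Antitone (radPow B M) :=
  antitone_nat_of_succ_le radPow_succ_le

theorem uniserial_bot : IsUniserialMod B ↥(⊥ : Submodule B M) := by
  intro N N'
  left
  intro x hx
  rw [Subsingleton.elim x 0]
  exact zero_mem _

theorem uniserial_submodule (h : IsUniserialMod B M) (N : Submodule B M) :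
    IsUniserialMod B ↥N := by
  intro S S'
  rcases h (S.map N.subtype) (S'.map N.subtype) with hle | hle
  · exact Or.inl ((Submodule.map_le_map_iff_of_injective N.injective_subtype _ _).1 hle)
  · exact Or.inr ((Submodule.map_le_map_iff_of_injective N.injective_subtype _ _).1 hle)

theorem uniserial_of_surjective {M' : Type*} [AddCommGroup M'] [Module B M']
    (g : M →ₗ[B] M') (hg : Function.Surjective g) (h : IsUniserialMod B M) :
    IsUniserialMod B M' := by
  intro S S'
  rcases h (S.comap g) (S'.comap g) with hle | hle
  · exact Or.inl (by
      rw [← Submodule.map_comap_eq_of_surjective hg S, ← Submodule.map_comap_eq_of_surjective hg S']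
      exact Submodule.map_mono hle)
  · exact Or.inr (by
      rw [← Submodule.map_comap_eq_of_surjective hg S, ← Submodule.map_comap_eq_of_surjective hg S']
      exact Submodule.map_mono hle)

theorem uniserial_map {M' : Type*} [AddCommGroup M'] [Module B M']
    (f : M →ₗ[B] M') {N : Submodule B M} (h : IsUniserialMod B ↥N) :
    IsUniserialMod B ↥(N.map f) := by
  let g : ↥N →ₗ[B] ↥(N.map f) :=
    (f.domRestrict N).codRestrict (N.map f) (fun x => ⟨x.1, x.2, rfl⟩)
  have hg : Function.Surjective g := by
    rintro ⟨y, x, hx, rfl⟩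
    exact ⟨⟨x, hx⟩, rfl⟩
  exact uniserial_of_surjective g hg h

/-- A module all of whose elements are killed by the Jacobson radical is semisimple
(over a left artinian ring). -/
theorem semisimple_of_killed [IsArtinian B B]
    (hk : ∀ (x : M), ∀ r ∈ Ideal.jacobson (⊥ : Ideal B), r • x = 0) :
    IsSemisimpleModule B M := by
  haveI := isSemisimpleModule_quot_jacobson (B := B)
  let φ : M → (B ⧸ Ideal.jacobson (⊥ : Ideal B)) →ₗ[B] M := fun x =>
    (Ideal.jacobson (⊥ : Ideal B)).liftQ (LinearMap.toSpanSingleton B M x)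
      (fun r hr => by simpa using hk x r hr)
  refine isSemisimpleModule_of_isSemisimpleModule_submodule'
    (p := fun x : M => LinearMap.range (φ x)) (fun x => IsSemisimpleModule.range _) ?_
  rw [eq_top_iff]
  intro x _
  refine Submodule.mem_iSup_of_mem x ⟨Submodule.Quotient.mk 1, ?_⟩
  simp only [φ, Submodule.liftQ_apply]; simp

theorem bot_or_atom_of_uniserial_semisimple {X : Submodule B M}
    (hu : IsUniserialMod B ↥X) (hss : IsSemisimpleModule B ↥X) :
    X = ⊥ ∨ IsAtom X := by
  by_cases hbot : X = ⊥
  · exact Or.inl hbot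
  refine Or.inr ⟨hbot, fun b hb => ?_⟩
  set b' : Submodule B ↥X := b.comap X.subtype with hb'
  obtain ⟨c', hc'⟩ := exists_isCompl b'
  have hmapb : b'.map X.subtype = b := by
    rw [hb', Submodule.map_comap_subtype, inf_of_le_right hb.le]
  rcases hu b' c' with hle | hle
  · have : b' = ⊥ := by
      rw [← (hc'.inf_eq_bot)]
      exact le_antisymm (le_inf le_rfl hle) inf_le_left
    rw [← hmapb, this, Submodule.map_bot]
  · exfalso
    have htop : b' = ⊤ := by
      rw [← (hc'.sup_eq_top), sup_of_le_left hle]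
    have : b = X := by
      rw [← hmapb, htop, Submodule.map_subtype_top]
    exact hb.ne this

/-- covering step in the modular lattice of submodules -/
theorem eq_of_atom_cover {Y c e : Submodule B M} (hY : IsAtom Y) (hYc : ¬ Y ≤ c)
    (h1 : c ≤ e) (h2 : e ≤ c ⊔ Y) : e = c ∨ e = c ⊔ Y := by
  have he : e = c ⊔ (Y ⊓ e) := by
    rw [← sup_inf_assoc_of_le Y h1, inf_eq_right.2 h2]
  rcases (hY.le_iff.1 inf_le_left : Y ⊓ e = ⊥ ∨ Y ⊓ e = Y) with h | h
  · left; rw [he, h, sup_bot_eq]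
  · right; rw [he, h]


theorem selection {n : ℕ} {Zb : Fin n → Submodule B M}
    (hZ : ∀ i, Zb i = ⊥ ∨ IsAtom (Zb i)) {X Y W : Submodule B M}
    (hX : X = ⊥ ∨ IsAtom X) (hY : Y = ⊥ ∨ IsAtom Y) (hW : W = X ⊔ Y)
    (hsup : ⨆ i, Zb i = W) (hWne : W ≠ ⊥) :
    (∃ i, W = Zb i) ∨ (∃ i j, i ≠ j ∧ W = Zb i ⊔ Zb j) := by
  by_cases hcase : ∀ i, Zb i ≤ Y
  · -- W = Y is an atom
    have hWY : W = Y := le_antisymm (hsup ▸ iSup_le hcase) (hW ▸ le_sup_right)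
    have hYatom : IsAtom Y := hY.resolve_left (fun h => hWne (hWY.trans h))
    obtain ⟨i, hi⟩ : ∃ i, Zb i ≠ ⊥ := by
      by_contra hno
      push_neg at hno
      exact hWne (hsup ▸ by simp [hno])
    have hZi : IsAtom (Zb i) := (hZ i).resolve_left hi
    left
    refine ⟨i, ?_⟩
    have hle : Zb i ≤ W := hsup ▸ le_iSup Zb i
    rcases (hWY ▸ hYatom.le_iff.1 (hWY ▸ hle) : Zb i = ⊥ ∨ Zb i = W) with h | h
    · exact absurd h hi
    · exact h.symm
  · push_neg at hcase
    obtain ⟨i₁, hi₁⟩ := hcase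
    have hZi₁ : IsAtom (Zb i₁) := (hZ i₁).resolve_left (fun h => hi₁ (h ▸ bot_le))
    have hZi₁W : Zb i₁ ≤ W := hsup ▸ le_iSup Zb i₁
    have hXY : ¬ X ≤ Y := by
      intro hXle
      exact hi₁ (hZi₁W.trans (le_of_eq (hW.trans (sup_eq_right.2 hXle))))
    have hXatom : IsAtom X := hX.resolve_left (fun h => hXY (h ▸ bot_le))
    -- W = Y ⊔ Zb i₁
    have h1 : W = Y ⊔ Zb i₁ := by
      rcases eq_of_atom_cover hXatom hXY (le_sup_left : Y ≤ Y ⊔ Zb i₁)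
          (sup_le le_sup_left (by rw [sup_comm Y X, ← hW]; exact hZi₁W)) with h | h
      · exact absurd (le_sup_right.trans h.le) hi₁
      · rw [h, hW, sup_comm]
    by_cases hcase2 : ∀ j, Zb j ≤ Zb i₁
    · left
      exact ⟨i₁, le_antisymm (hsup ▸ iSup_le hcase2) hZi₁W⟩
    · push_neg at hcase2
      obtain ⟨j, hj⟩ := hcase2
      have hZj : IsAtom (Zb j) := (hZ j).resolve_left (fun h => hj (h ▸ bot_le))
      have hZjW : Zb j ≤ W := hsup ▸ le_iSup Zb j
      have hYi₁ : ¬ Y ≤ Zb i₁ := by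
        intro hYle
        exact hj (hZjW.trans (le_of_eq (h1.trans (sup_eq_right.2 hYle))))
      have hYatom : IsAtom Y := hY.resolve_left (fun h => hYi₁ (h ▸ bot_le))
      rcases eq_of_atom_cover hYatom hYi₁ (le_sup_left : Zb i₁ ≤ Zb i₁ ⊔ Zb j)
          (sup_le le_sup_left (by rw [sup_comm (Zb i₁) Y, ← h1]; exact hZjW)) with h | h
      · exact absurd (le_sup_right.trans h.le) hj
      · right
        refine ⟨i₁, j, fun hij => hj (hij ▸ le_rfl), ?_⟩
        rw [h, h1, sup_comm]


/-- The key module-level statement: a multiserial, quasi-biserial module over a left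
artinian and noetherian ring is biserial. -/
theorem isBiserialMod_of_multiserial_quasiBiserial [IsArtinian B B] [IsNoetherian B B]
    (hms : IsMultiserialMod B M) (hqb : IsQuasiBiserialMod B M) : IsBiserialMod B M := by
  obtain ⟨hnotuni, m, hm, U, V, hUuni, hVuni, hUV, hquot⟩ := hqb
  obtain ⟨n, Z, hZuni, hZsup, hZint⟩ := hms
  refine ⟨hnotuni, ?_⟩
  -- notation
  have hR2 : radPow B M 2 = radSucc B (radPow B M 1) := radPow_succ 1
  set Q := radPow B M 1 with hQdef
  set R2 := radPow B M 2 with hR2def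
  have nak : ∀ C : Submodule B M, Q ≤ C ⊔ R2 → Q ≤ C := by
    intro C hC
    refine nakayama (N := Q) (C := C) ?_
    rw [sup_comm]
    rwa [hR2] at hC
  have hZleQ : ∀ i, Z i ≤ Q := fun i => hZsup ▸ le_iSup Z i
  by_cases hQR2 : Q ≤ R2
  · -- then Q = ⊥
    have hQbot : Q = ⊥ := le_bot_iff.1 (nak ⊥ (by simpa using hQR2))
    exact ⟨⊥, ⊥, uniserial_bot, uniserial_bot, by simp [hQbot], Or.inl (by simp)⟩
  · set π := R2.mkQ with hπ
    have hkerπ : LinearMap.ker π = R2 := R2.ker_mkQ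
    -- elements of images of submodules of Q are killed by the radical
    have hkill : ∀ (N : Submodule B M), N ≤ Q → ∀ x ∈ N.map π,
        ∀ r ∈ Ideal.jacobson (⊥ : Ideal B), r • x = 0 := by
      rintro N hN x ⟨q, hq, rfl⟩ r hr
      rw [hπ, ← LinearMap.map_smul, Submodule.mkQ_apply, Submodule.Quotient.mk_eq_zero]
      rw [hR2, radSucc_eq_idealApp]
      exact smul_mem_idealApp hr (hN hq)
    have hsskill : ∀ (N : Submodule B M), N ≤ Q → IsSemisimpleModule B ↥(N.map π) := by
      intro N hN
      refine semisimple_of_killed (fun x r hr => ?_)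
      exact Subtype.ext (by simpa using hkill N hN x.1 x.2 r hr)
    have hatom : ∀ (N : Submodule B M), N ≤ Q → IsUniserialMod B ↥N →
        (N.map π = ⊥ ∨ IsAtom (N.map π)) := fun N hN hNu =>
      bot_or_atom_of_uniserial_semisimple (uniserial_map π hNu) (hsskill N hN)
    -- W and the Z-images
    have hWne : Q.map π ≠ ⊥ := by
      intro hbot
      exact hQR2 (by
        have := Submodule.map_le_iff_le_comap.1 hbot.le
        rwa [Submodule.comap_bot, hkerπ] at this)
    have hZsupW : ⨆ i, (Z i).map π = Q.map π := by
      rw [← Submodule.map_iSup, hZsup]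
    -- construct X, Y with W = X ⊔ Y, each ⊥ or an atom
    obtain ⟨X, Y, hX, hY, hW⟩ : ∃ X Y : Submodule B (M ⧸ R2),
        (X = ⊥ ∨ IsAtom X) ∧ (Y = ⊥ ∨ IsAtom Y) ∧ Q.map π = X ⊔ Y := by
      rcases eq_or_lt_of_le (show 1 ≤ m from hm) with h1 | h2
      · -- m = 1
        have hm1 : m = 1 := h1.symm
        have hQUV : Q = U ⊔ V := by rw [hQdef, ← hUV, hm1]
        have hUQ : U ≤ Q := hQUV ▸ le_sup_left
        have hVQ : V ≤ Q := hQUV ▸ le_sup_right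
        exact ⟨U.map π, V.map π, hatom U hUQ hUuni, hatom V hVQ hVuni,
          by rw [hQUV, Submodule.map_sup]⟩
      · -- m ≥ 2 : the image of Q is uniserial
        have hmle : radPow B M m ≤ R2 := hR2def ▸ radPow_antitone h2
        set ρ := (radPow B M m).mkQ with hρ
        let φ : (M ⧸ radPow B M m) →ₗ[B] (M ⧸ R2) :=
          (radPow B M m).liftQ π (by rw [hkerπ]; exact hmle)
        have hφρ : φ.comp ρ = π := (radPow B M m).liftQ_mkQ π _
        have hmapQ : Q.map π = (Q.map ρ).map φ := by
          rw [← Submodule.map_comp, hφρ]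
        have huniW : IsUniserialMod B ↥(Q.map π) := by
          rw [hmapQ]
          exact uniserial_map φ (uniserial_submodule hquot (Q.map ρ))
        refine ⟨Q.map π, ⊥, ?_, Or.inl rfl, by rw [sup_bot_eq]⟩
        exact bot_or_atom_of_uniserial_semisimple huniW (hsskill Q le_rfl)
    rcases selection (fun i => hatom (Z i) (hZleQ i) (hZuni i)) hX hY hW hZsupW hWne with
      ⟨i, hi⟩ | ⟨i, j, hij, hij2⟩
    · -- Q = Z i
      have hQZ : Q = Z i := by
        refine le_antisymm (nak (Z i) ?_) (hZleQ i)
        have := (LinearMap.map_le_map_iff π).1 hi.le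
        rwa [hkerπ] at this
      exact ⟨Z i, ⊥, hZuni i, uniserial_bot, by rw [hQZ, sup_bot_eq], Or.inl (by simp)⟩
    · -- Q = Z i ⊔ Z j
      have hQZ : Q = Z i ⊔ Z j := by
        refine le_antisymm (nak (Z i ⊔ Z j) ?_) (sup_le (hZleQ i) (hZleQ j))
        have : Q.map π ≤ (Z i ⊔ Z j).map π := by rw [Submodule.map_sup]; exact hij2.le
        have := (LinearMap.map_le_map_iff π).1 this
        rwa [hkerπ] at this
      exact ⟨Z i, Z j, hZuni i, hZuni j, hQZ, hZint i j hij⟩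

end Aux

theorem fd_isArtinian (k : Type v) (B : Type u) [Field k] [Ring B] [Algebra k B]
    [FiniteDimensional k B] : IsArtinian B B := by
  haveI : IsArtinian k B := isArtinian_of_fg_of_artinian' (M := B)
  exact isArtinian_of_tower k inferInstance

theorem fd_isNoetherian (k : Type v) (B : Type u) [Field k] [Ring B] [Algebra k B]
    [FiniteDimensional k B] : IsNoetherian B B :=
  isNoetherian_of_tower k inferInstance

/-- Proposition: multiserial ∩ quasi-biserial = biserial, one inclusion.
If a finite-dimensional algebra over a field is both multiserial and quasi-biserial,
then it is biserial. -/
theorem multiserial_and_quasiBiserial_is_biserial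
    (k : Type v) [Field k] (A : Type u) [Ring A] [Algebra k A] [FiniteDimensional k A]
    (h₁ : IsMultiserialAlgebra A) (h₂ : IsQuasiBiserialAlgebra A) :
    IsBiserialAlgebra A := by
  haveI : IsArtinian A A := fd_isArtinian k A
  haveI : IsNoetherian A A := fd_isNoetherian k A
  haveI : FiniteDimensional k Aᵐᵒᵖ := Module.Finite.equiv (MulOpposite.opLinearEquiv k)
  haveI : IsArtinian Aᵐᵒᵖ Aᵐᵒᵖ := fd_isArtinian k Aᵐᵒᵖ
  haveI : IsNoetherian Aᵐᵒᵖ Aᵐᵒᵖ := fd_isNoetherian k Aᵐᵒᵖ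
  constructor
  · intro M _ _ hproj hind
    rcases h₂.1 M hproj hind with huni | hqb
    · exact Or.inl huni
    · exact Or.inr (isBiserialMod_of_multiserial_quasiBiserial (h₁.1 M hproj hind) hqb)
  · intro M _ _ hproj hind
    rcases h₂.2 M hproj hind with huni | hqb
    · exact Or.inl huni
    · exact Or.inr (isBiserialMod_of_multiserial_quasiBiserial (h₁.2 M hproj hind) hqb)
end

section
/- Let A = kQ/I be a finite-dimensional symmetric bound quiver algebra in which the image of every arrow is nonzero, and let C be a maximal nonzero path in A, i.e., C ∉ I but αC ∈ I and Cβ ∈ I for all arrows α, β. Then C is a cycle: s(C) = t(C). -/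
/-- A presentation of the algebra `A` as a bound quiver algebra `kQ/I`: a multiplicative
assignment of elements of `A` to the paths of `Q`, sending the trivial paths to a complete
family of orthogonal idempotents, whose path images span `A`. The ideal `I` is recovered as
the set of paths `p` with `φ p = 0`. -/
structure QuivPres (k : Type*) [Field k] (V : Type*) [Quiver V] [Fintype V]
    (A : Type*) [Ring A] [Algebra k A] where
  φ : ∀ ⦃a b : V⦄, Quiver.Path a b → A
  φ_comp : ∀ ⦃a b c : V⦄ (p : Quiver.Path a b) (q : Quiver.Path b c),
    φ (p.comp q) = φ q * φ p
  φ_orth : ∀ ⦃a b : V⦄, a ≠ b →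
    φ (Quiver.Path.nil : Quiver.Path a a) * φ (Quiver.Path.nil : Quiver.Path b b) = 0
  φ_one : ∑ v : V, φ (Quiver.Path.nil : Quiver.Path v v) = 1
  φ_span : Submodule.span k {x : A | ∃ (a b : V) (p : Quiver.Path a b), φ p = x} = ⊤

/-- Admissibility of the kernel of a presentation: arrows survive in `A`, and all long
enough paths vanish. -/
def QuivPres.Admissible {k : Type*} [Field k] {V : Type*} [Quiver V] [Fintype V]
    {A : Type*} [Ring A] [Algebra k A] (P : QuivPres k V A) : Prop :=
  (∀ ⦃a b : V⦄ (f : a ⟶ b), P.φ f.toPath ≠ 0) ∧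
    ∃ N : ℕ, ∀ ⦃a b : V⦄ (p : Quiver.Path a b), N ≤ p.length → P.φ p = 0

/-- The (left) socle of a ring, as a left module over itself. -/
def leftSocle (A : Type*) [Ring A] : Submodule A A :=
  sSup {N : Submodule A A | IsSimpleModule A ↥N}

open Quiver

namespace QuivPres

variable {k : Type*} [Field k] {V : Type*} [Quiver V] [Fintype V]
  {A : Type*} [Ring A] [Algebra k A] (P : QuivPres k V A)

theorem φ_nil_mul {a b : V} (p : Path a b) : P.φ (Path.nil : Path b b) * P.φ p = P.φ p := by
  simpa using (P.φ_comp p Path.nil).symm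

theorem φ_mul_nil {a b : V} (p : Path a b) : P.φ p * P.φ (Path.nil : Path a a) = P.φ p := by
  simpa using (P.φ_comp Path.nil p).symm

theorem φ_cons {a b c : V} (p : Path a b) (f : b ⟶ c) :
    P.φ (p.cons f) = P.φ f.toPath * P.φ p := by
  rw [← Path.comp_toPath_eq_cons, P.φ_comp]

theorem φ_mul_φ_of_ne {a b c d : V} (p : Path a b) (q : Path c d) (h : a ≠ d) :
    P.φ p * P.φ q = 0 := by
  rw [← P.φ_mul_nil p, ← P.φ_nil_mul q, mul_assoc, ← mul_assoc (P.φ (Path.nil : Path a a)),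
    P.φ_orth h, zero_mul, mul_zero]

theorem linearMap_eq_zero {M : Type*} [AddCommGroup M] [Module k M] (L : A →ₗ[k] M)
    (h : ∀ ⦃a b : V⦄ (p : Path a b), L (P.φ p) = 0) : L = 0 :=
  LinearMap.ext_on P.φ_span (by rintro _ ⟨a, b, p, rfl⟩; exact h p)

section Symmetric

variable {P} {ψ : A →ₗ[k] k}

theorem map_φ_eq_zero_of_ne (hsymm : ∀ x y : A, ψ (x * y) = ψ (y * x)) {a b : V} (p : Path a b)
    (hab : a ≠ b) : ψ (P.φ p) = 0 := by
  rw [← P.φ_nil_mul p, hsymm, P.φ_mul_φ_of_ne _ _ hab, map_zero]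

/-- By right maximality, among the paths ending at `a` only the trivial one can pair nontrivially
with `C`, and it gives `ψ (P.φ C)`, which vanishes because `C` is not a cycle. -/
theorem map_φ_mul_φ_eq_zero_of_right_maximal (hsymm : ∀ x y : A, ψ (x * y) = ψ (y * x))
    {a b : V} (C : Path a b) (hab : a ≠ b)
    (hmaxR : ∀ (c : V) (β : c ⟶ a), P.φ (β.toPath.comp C) = 0)
    {c d : V} (p : Path c d) : ψ (P.φ C * P.φ p) = 0 := by
  by_cases hd : a = d
  · subst hd
    cases p with
    | nil => rw [P.φ_mul_nil, P.map_φ_eq_zero_of_ne hsymm C hab]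
    | cons q β => rw [P.φ_cons, ← mul_assoc, ← P.φ_comp, hmaxR, zero_mul, map_zero]
  · rw [P.φ_mul_φ_of_ne C p hd, map_zero]

end Symmetric

end QuivPres

theorem maximal_path_is_cycle_general
    (k : Type*) [Field k] (V : Type*) [Quiver V] [Fintype V]
    (A : Type*) [Ring A] [Algebra k A]
    (P : QuivPres k V A)
    (ψ : A →ₗ[k] k) (hsymm : ∀ x y : A, ψ (x * y) = ψ (y * x))
    (hnd : ∀ x : A, (∀ y : A, ψ (x * y) = 0) → x = 0)
    {a b : V} (C : Quiver.Path a b) (hC : P.φ C ≠ 0)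
    (hmaxR : ∀ (c : V) (β : c ⟶ a), P.φ (β.toPath.comp C) = 0) :
    a = b := by
  by_contra hab
  have hψC : ψ.comp (LinearMap.mulLeft k (P.φ C)) = 0 :=
    P.linearMap_eq_zero _ fun _ _ p => P.map_φ_mul_φ_eq_zero_of_right_maximal hsymm C hab hmaxR p
  exact hC (hnd _ fun y => LinearMap.congr_fun hψC y)

/-- maximal nonzero paths in symmetric algebras are cycles. -/
theorem maximal_path_is_cycle
    (k : Type*) [Field k] (V : Type*) [Quiver V] [Fintype V]
    (A : Type*) [Ring A] [Algebra k A] [FiniteDimensional k A]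
    (P : QuivPres k V A)
    (ψ : A →ₗ[k] k) (hsymm : ∀ x y : A, ψ (x * y) = ψ (y * x))
    (hnd : ∀ x : A, (∀ y : A, ψ (x * y) = 0) → x = 0)
    (harr : ∀ ⦃a b : V⦄ (f : a ⟶ b), P.φ f.toPath ≠ 0)
    {a b : V} (C : Quiver.Path a b) (hC : P.φ C ≠ 0)
    (hmaxL : ∀ (c : V) (α : b ⟶ c), P.φ (C.cons α) = 0)
    (hmaxR : ∀ (c : V) (β : c ⟶ a), P.φ (β.toPath.comp C) = 0) :
    a = b :=
  maximal_path_is_cycle_general k V A P ψ hsymm hnd C hC hmaxR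
end

section
/- Let Γ = (V, H, s, ι, ρ) be a ribbon graph and L a set of labelable edges such that at every vertex v with val(v) ≥ 2 at least two half-edges incident to v belong to edges not in L. Then the construction Γ∖L = (V, H', s', ι', ρ'), where H' consists of half-edges whose edges are not in L, s' and ι' are restrictions, and ρ'(h) = ρ^i(h) for the smallest positive i with ρ^i(h) ∈ H', is again a well-defined ribbon graph: ι' is a fixed-point-free involution on H', and ρ' is a permutation of H' whose cycles are the fibers of s'. -/
/-!
Away from labeled edges, `ρ'` is the first-return map of `ρ` to the set `H'` of remaining
half-edges. Every half-edge is `ρ`-periodic, so the first return exists; the first-return map of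
an injective map is injective on `H'` by minimality of return times, and by induction on `n`
every `ρ`-iterate `ρ^n(h)` lying in `H'` is a `ρ'`-iterate of `h`. The latter gives both
surjectivity (apply it along a full period) and the transitivity of `ρ'` on the fibers of `s`.
-/

/-- A ribbon graph: vertices `V`, half-edges `H`, incidence `s`, a fixed-point-free
involution `ι` whose orbits are the edges, and a permutation `ρ` whose cycles are
exactly the fibers `H_v = s⁻¹(v)`. -/
structure RibbonGraph (V H : Type*) where
  s : H → V
  ι : H → H
  ι_invol : ∀ h, ι (ι h) = h
  ι_ne : ∀ h, ι h ≠ h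
  ρ : Equiv.Perm H
  s_ρ : ∀ h, s (ρ h) = s h
  ρ_trans : ∀ h h', s h = s h' → ∃ n : ℕ, (⇑ρ)^[n] h = h'

variable {V H : Type*}

/-- The edge containing a half-edge. -/
def RibbonGraph.edgeOf [DecidableEq H] (Γ : RibbonGraph V H) (h : H) : Finset H :=
  {h, Γ.ι h}

/-- The set of edges of a ribbon graph. -/
def RibbonGraph.edges [Fintype H] [DecidableEq H] (Γ : RibbonGraph V H) :
    Finset (Finset H) :=
  Finset.univ.image (fun h => Γ.edgeOf h)

/-- The valency of a vertex: the number of half-edges incident to it. -/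
def RibbonGraph.valency [Fintype H] [DecidableEq V] (Γ : RibbonGraph V H) (v : V) : ℕ :=
  (Finset.univ.filter (fun h => Γ.s h = v)).card

namespace Function

variable {α : Type*} {f : α → α} {S : Set α} {x : α} {j m : ℕ}

/-- `0` when `x` never returns to `S`. -/
noncomputable def firstReturnTime (f : α → α) (S : Set α) (x : α) : ℕ :=
  sInf {i | 0 < i ∧ f^[i] x ∈ S}

noncomputable def firstReturn (f : α → α) (S : Set α) (x : α) : α :=
  f^[firstReturnTime f S x] x

theorem exists_pos_iterate_mem_of_mem_periodicPts (hx : x ∈ periodicPts f) (hxS : x ∈ S) :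
    ∃ i, 0 < i ∧ f^[i] x ∈ S := by
  obtain ⟨n, hn, hper⟩ := hx
  exact ⟨n, hn, hper.eq.symm ▸ hxS⟩

theorem firstReturnTime_pos_and_mem (hx : ∃ i, 0 < i ∧ f^[i] x ∈ S) :
    0 < firstReturnTime f S x ∧ firstReturn f S x ∈ S :=
  Nat.sInf_mem hx

theorem firstReturnTime_le (hj : 0 < j) (hjS : f^[j] x ∈ S) : firstReturnTime f S x ≤ j :=
  Nat.sInf_le ⟨hj, hjS⟩

theorem iterate_notMem_of_lt_firstReturnTime (hj : 0 < j) (hjt : j < firstReturnTime f S x) :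
    f^[j] x ∉ S :=
  fun hjS => Nat.notMem_of_lt_sInf hjt ⟨hj, hjS⟩

theorem firstReturn_invariant {β : Type*} {g : α → β} (hg : g ∘ f = g) (x : α) :
    g (firstReturn f S x) = g x :=
  congrFun (iterate_invariant hg _) x

theorem mapsTo_firstReturn (hS : S ⊆ periodicPts f) : Set.MapsTo (firstReturn f S) S S :=
  fun _ hx =>
    (firstReturnTime_pos_and_mem (exists_pos_iterate_mem_of_mem_periodicPts (hS hx) hx)).2

/-- Otherwise `a` would be an iterate of `b` lying in `S` before `b` first returns. -/
theorem eq_of_firstReturn_eq_of_firstReturnTime_le (hf : Injective f) {a b : α}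
    (ha : a ∈ S) (ha_ret : ∃ i, 0 < i ∧ f^[i] a ∈ S)
    (hle : firstReturnTime f S a ≤ firstReturnTime f S b)
    (heq : firstReturn f S a = firstReturn f S b) : a = b := by
  set s := firstReturnTime f S a
  set t := firstReturnTime f S b
  have hab : a = f^[t - s] b := by
    refine hf.iterate s ?_
    rw [← iterate_add_apply, Nat.add_sub_cancel' hle]
    exact heq
  rcases hle.eq_or_lt with hst | hst
  · rw [hab, hst, Nat.sub_self, iterate_zero_apply]
  · have hs := (firstReturnTime_pos_and_mem ha_ret).1
    exact absurd (hab ▸ ha) (iterate_notMem_of_lt_firstReturnTime (by omega) (by omega))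

theorem injOn_firstReturn (hf : Injective f) (hS : S ⊆ periodicPts f) :
    Set.InjOn (firstReturn f S) S := by
  intro a ha b hb heq
  have hret {y} (hy : y ∈ S) := exists_pos_iterate_mem_of_mem_periodicPts (hS hy) hy
  rcases le_total (firstReturnTime f S a) (firstReturnTime f S b) with hle | hle
  · exact eq_of_firstReturn_eq_of_firstReturnTime_le hf ha (hret ha) hle heq
  · exact (eq_of_firstReturn_eq_of_firstReturnTime_le hf hb (hret hb) hle heq.symm).symm

theorem exists_pos_iterate_firstReturn_eq (hm : 0 < m) (hmS : f^[m] x ∈ S) :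
    ∃ n, 0 < n ∧ (firstReturn f S)^[n] x = f^[m] x := by
  induction m using Nat.strong_induction_on generalizing x with
  | _ m ih =>
    obtain ⟨ht, hR⟩ := firstReturnTime_pos_and_mem ⟨m, hm, hmS⟩
    have htm : firstReturnTime f S x ≤ m := firstReturnTime_le hm hmS
    have hshift : f^[m - firstReturnTime f S x] (firstReturn f S x) = f^[m] x := by
      rw [firstReturn, ← iterate_add_apply, Nat.sub_add_cancel htm]
    rcases htm.eq_or_lt with hEq | hlt
    · exact ⟨1, one_pos, by rw [iterate_one, firstReturn, hEq]⟩
    · obtain ⟨n, -, hn⟩ := ih (m - firstReturnTime f S x) (by omega) (by omega)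
        (hshift ▸ hmS)
      exact ⟨n + 1, n.succ_pos, by rw [iterate_succ_apply, hn, hshift]⟩

theorem exists_iterate_firstReturn_eq (hmS : f^[m] x ∈ S) :
    ∃ n, (firstReturn f S)^[n] x = f^[m] x := by
  rcases m.eq_zero_or_pos with rfl | hm
  · exact ⟨0, rfl⟩
  · obtain ⟨n, -, hn⟩ := exists_pos_iterate_firstReturn_eq hm hmS
    exact ⟨n, hn⟩

theorem surjOn_firstReturn (hS : S ⊆ periodicPts f) : Set.SurjOn (firstReturn f S) S S := by
  intro y hy
  obtain ⟨n, hn, hper⟩ := hS hy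
  obtain ⟨k, hk, hky⟩ := exists_pos_iterate_firstReturn_eq hn (hper.eq.symm ▸ hy)
  obtain ⟨k, rfl⟩ := Nat.exists_eq_add_of_lt hk
  rw [zero_add, iterate_succ_apply', hper.eq] at hky
  exact ⟨_, (mapsTo_firstReturn hS).iterate k hy, hky⟩

theorem bijOn_firstReturn (hf : Injective f) (hS : S ⊆ periodicPts f) :
    Set.BijOn (firstReturn f S) S S :=
  ⟨mapsTo_firstReturn hS, injOn_firstReturn hf hS, surjOn_firstReturn hS⟩

end Function

namespace RibbonGraph

open Function

theorem mem_periodicPts_ρ (Γ : RibbonGraph V H) (h : H) : h ∈ periodicPts Γ.ρ := by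
  obtain ⟨n, hn⟩ := Γ.ρ_trans (Γ.ρ h) h (Γ.s_ρ h)
  exact mk_mem_periodicPts n.succ_pos (by rwa [IsPeriodicPt, IsFixedPt, iterate_succ_apply])

theorem s_comp_ρ (Γ : RibbonGraph V H) : Γ.s ∘ Γ.ρ = Γ.s :=
  funext Γ.s_ρ

end RibbonGraph

open Function in
theorem deletion_is_ribbonGraph_general
    (V H : Type*)
    (Γ : RibbonGraph V H) (L : Set H)
    (hLsym : ∀ h ∈ L, Γ.ι h ∈ L) :
    (∀ h : H, h ∉ L → Γ.ι h ∉ L) ∧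
    ∃ ρ' : H → H,
      (∀ h ∉ L, ρ' h ∉ L ∧ ∃ i : ℕ, 0 < i ∧ ρ' h = (⇑Γ.ρ)^[i] h ∧
        ∀ j : ℕ, 0 < j → j < i → (⇑Γ.ρ)^[j] h ∈ L) ∧
      Set.BijOn ρ' {h | h ∉ L} {h | h ∉ L} ∧
      (∀ h ∉ L, Γ.s (ρ' h) = Γ.s h) ∧
      (∀ h h' : H, h ∉ L → h' ∉ L → Γ.s h = Γ.s h' → ∃ n : ℕ, ρ'^[n] h = h') := by
  have hper : Lᶜ ⊆ periodicPts Γ.ρ := fun h _ => Γ.mem_periodicPts_ρ h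
  refine ⟨fun h hh hι => hh (Γ.ι_invol h ▸ hLsym _ hι), firstReturn Γ.ρ Lᶜ,
    fun h hh => ?_, bijOn_firstReturn Γ.ρ.injective hper,
    fun h _ => firstReturn_invariant Γ.s_comp_ρ h, fun h h' _ hh' hs => ?_⟩
  · obtain ⟨ht, hR⟩ := firstReturnTime_pos_and_mem
      (exists_pos_iterate_mem_of_mem_periodicPts (S := Lᶜ) (hper hh) hh)
    exact ⟨hR, _, ht, rfl,
      fun j hj hjt => not_not.mp (iterate_notMem_of_lt_firstReturnTime hj hjt)⟩
  · obtain ⟨m, rfl⟩ := Γ.ρ_trans h h' hs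
    exact exists_iterate_firstReturn_eq hh'

/-- the deletion Γ∖L is again a ribbon graph. -/
theorem deletion_is_ribbonGraph
    (V H : Type*) [Fintype V] [Fintype H] [DecidableEq V] [DecidableEq H]
    (Γ : RibbonGraph V H) (L : Set H)
    (hLsym : ∀ h ∈ L, Γ.ι h ∈ L)
    (hLlab : ∀ h ∈ L, Γ.ι (Γ.ρ h) = Γ.ρ (Γ.ι h))
    (htwo : ∀ v : V, (∃ h h' : H, h ≠ h' ∧ Γ.s h = v ∧ Γ.s h' = v) →
      ∃ h₁ h₂ : H, h₁ ≠ h₂ ∧ Γ.s h₁ = v ∧ Γ.s h₂ = v ∧ h₁ ∉ L ∧ h₂ ∉ L) :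
    (∀ h : H, h ∉ L → Γ.ι h ∉ L) ∧
    ∃ ρ' : H → H,
      (∀ h ∉ L, ρ' h ∉ L ∧ ∃ i : ℕ, 0 < i ∧ ρ' h = (⇑Γ.ρ)^[i] h ∧
        ∀ j : ℕ, 0 < j → j < i → (⇑Γ.ρ)^[j] h ∈ L) ∧
      Set.BijOn ρ' {h | h ∉ L} {h | h ∉ L} ∧
      (∀ h ∉ L, Γ.s (ρ' h) = Γ.s h) ∧
      (∀ h h' : H, h ∉ L → h' ∉ L → Γ.s h = Γ.s h' → ∃ n : ℕ, ρ'^[n] h = h') :=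
  deletion_is_ribbonGraph_general V H Γ L hLsym
end
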